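/- arXiv:1007.3172 — 2 statements merged into one kernel-verified Lean document; each statement's English description precedes it below -/
import Mathlib

section
/- Let u : ℝ⁴ → ℝ be biradial with u = φ(r1, r2). Then for x with r1, r2 > 0, the directional derivative ∇u · X2 equals w(r1,r2)·sin(θ1+θ2) and ∇u · X3 equals -w(r1,r2)·cos(θ1+θ2), where w(r1,r2) = (∂φ/∂r1)·r2 - (∂φ/∂r2)·r1 and θ1, θ2 are the polar angles of (x1,x2) and (x3,x4) respectively. -/
open Real

def X2 (x : Fin 4 → ℝ) : Fin 4 → ℝ := ![x 3, x 2, -x 1, -x 0]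
def X3 (x : Fin 4 → ℝ) : Fin 4 → ℝ := ![-x 2, x 3, x 0, -x 1]

/-! By the chain rule, `∇u · v = ∂₁φ · ⟨(x₁, x₂), (v₁, v₂)⟩ / r₁ + ∂₂φ · ⟨(x₃, x₄), (v₃, v₄)⟩ / r₂`.
In polar coordinates the addition formulas turn these two inner products into
`±r₁ r₂ sin (θ₁ + θ₂)` for `v = X2 x` and `∓r₁ r₂ cos (θ₁ + θ₂)` for `v = X3 x`. -/

theorem ContinuousLinearMap.apply_pair {𝕜 M : Type*} [NontriviallyNormedField 𝕜]
    [NormedAddCommGroup M] [NormedSpace 𝕜 M] (L : 𝕜 × 𝕜 →L[𝕜] M) (a b : 𝕜) :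
    L (a, b) = a • L (1, 0) + b • L (0, 1) := by
  rw [← map_smul, ← map_smul, ← map_add]
  simp

theorem HasFDerivAt.sqrt_sq_add_sq {E : Type*} [NormedAddCommGroup E] [NormedSpace ℝ E]
    {f g : E → ℝ} {f' g' : E →L[ℝ] ℝ} {x : E} (hf : HasFDerivAt f f' x)
    (hg : HasFDerivAt g g' x) (hx : f x ^ 2 + g x ^ 2 ≠ 0) :
    HasFDerivAt (fun y => √(f y ^ 2 + g y ^ 2))
      ((√(f x ^ 2 + g x ^ 2))⁻¹ • (f x • f' + g x • g')) x := by
  refine (((hf.pow 2).add (hg.pow 2)).sqrt hx).congr_fderiv ?_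
  ext v
  simp
  ring

theorem sqrt_mul_cos_sq_add_mul_sin_sq {r : ℝ} (hr : 0 ≤ r) (θ : ℝ) :
    √((r * cos θ) ^ 2 + (r * sin θ) ^ 2) = r := by
  rw [mul_pow, mul_pow, ← mul_add, cos_sq_add_sin_sq, mul_one, sqrt_sq hr]

theorem fderiv_biradial_apply {φ : ℝ × ℝ → ℝ} {x : Fin 4 → ℝ} {r₁ r₂ : ℝ}
    (hφ : DifferentiableAt ℝ φ (r₁, r₂)) (hx₁ : √(x 0 ^ 2 + x 1 ^ 2) = r₁)
    (hx₂ : √(x 2 ^ 2 + x 3 ^ 2) = r₂) (hr₁ : 0 < r₁) (hr₂ : 0 < r₂) (v : Fin 4 → ℝ) :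
    fderiv ℝ (fun y : Fin 4 → ℝ => φ (√(y 0 ^ 2 + y 1 ^ 2), √(y 2 ^ 2 + y 3 ^ 2))) x v =
      fderiv ℝ φ (r₁, r₂) ((x 0 * v 0 + x 1 * v 1) / r₁, (x 2 * v 2 + x 3 * v 3) / r₂) := by
  have hne₁ : x 0 ^ 2 + x 1 ^ 2 ≠ 0 := fun h => by simp [h, hr₁.ne] at hx₁
  have hne₂ : x 2 ^ 2 + x 3 ^ 2 ≠ 0 := fun h => by simp [h, hr₂.ne] at hx₂
  have hcoord (i : Fin 4) := hasFDerivAt_apply (𝕜 := ℝ) i x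
  have hρ₁ := (hcoord 0).sqrt_sq_add_sq (hcoord 1) hne₁
  have hρ₂ := (hcoord 2).sqrt_sq_add_sq (hcoord 3) hne₂
  subst hx₁ hx₂
  have hu : HasFDerivAt (fun y : Fin 4 → ℝ => φ (√(y 0 ^ 2 + y 1 ^ 2), √(y 2 ^ 2 + y 3 ^ 2)))
      _ x := hφ.hasFDerivAt.comp x (hρ₁.prodMk hρ₂)
  simp [hu.fderiv, div_eq_inv_mul, mul_add]

/-- For a biradial `u = φ(r₁, r₂)` on ℝ⁴, at a point with polar coordinates
`(r₁, θ₁, r₂, θ₂)` with `r₁, r₂ > 0`, the directional derivatives along X2, X3 are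
`w·sin(θ₁+θ₂)` and `-w·cos(θ₁+θ₂)`, where `w = (∂φ/∂r₁)·r₂ - (∂φ/∂r₂)·r₁`. -/
theorem biradial_deriv_X2_X3 (φ : ℝ × ℝ → ℝ) (hφ : ContDiff ℝ 1 φ)
    (u : (Fin 4 → ℝ) → ℝ)
    (hu : ∀ x : Fin 4 → ℝ,
      u x = φ (Real.sqrt ((x 0) ^ 2 + (x 1) ^ 2), Real.sqrt ((x 2) ^ 2 + (x 3) ^ 2)))
    (r₁ r₂ θ₁ θ₂ : ℝ) (hr₁ : 0 < r₁) (hr₂ : 0 < r₂)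
    (x : Fin 4 → ℝ)
    (hx : x = ![r₁ * cos θ₁, r₁ * sin θ₁, r₂ * cos θ₂, r₂ * sin θ₂])
    (w : ℝ)
    (hw : w = fderiv ℝ φ (r₁, r₂) (1, 0) * r₂ - fderiv ℝ φ (r₁, r₂) (0, 1) * r₁) :
    fderiv ℝ u x (X2 x) = w * sin (θ₁ + θ₂) ∧
      fderiv ℝ u x (X3 x) = -(w * cos (θ₁ + θ₂)) := by
  obtain rfl : u = _ := funext hu
  have hx₀ : x 0 = r₁ * cos θ₁ := by simp [hx]
  have hx₁ : x 1 = r₁ * sin θ₁ := by simp [hx]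
  have hx₂ : x 2 = r₂ * cos θ₂ := by simp [hx]
  have hx₃ : x 3 = r₂ * sin θ₂ := by simp [hx]
  have hρ₁ : √(x 0 ^ 2 + x 1 ^ 2) = r₁ := by
    rw [hx₀, hx₁, sqrt_mul_cos_sq_add_mul_sin_sq hr₁.le]
  have hρ₂ : √(x 2 ^ 2 + x 3 ^ 2) = r₂ := by
    rw [hx₂, hx₃, sqrt_mul_cos_sq_add_mul_sin_sq hr₂.le]
  have hφ' := hφ.differentiable one_ne_zero (r₁, r₂)
  constructor
  all_goals
    rw [fderiv_biradial_apply hφ' hρ₁ hρ₂ hr₁ hr₂, ContinuousLinearMap.apply_pair]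
    simp only [hw, X2, X3, Matrix.cons_val, hx₀, hx₁, hx₂, hx₃, sin_add, cos_add, smul_eq_mul]
    field_simp
    ring
end

section
/- For any α, β, γ ∈ ℝ with α = cos γ and β = sin γ, one has ∇(θ1+θ2) · (α X2 + β X3) = (r2/r1 - r1/r2)·cos(θ1 + θ2 - γ) away from {r1=0} ∪ {r2=0}. -/
open Real

def dot (a b : Fin 4 → ℝ) : ℝ := ∑ i, a i * b i

/-!
With `∇θ₁ = (-x₂, x₁, 0, 0)/r₁²` and `∇θ₂ = (0, 0, -x₄, x₃)/r₂²`, both fields meet `∇θ₁` and `∇θ₂`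
in the same mixed product of the two coordinate planes, with opposite signs:
`(∇θ₁ + ∇θ₂)·X2 = (x₁x₃ - x₂x₄)(1/r₁² - 1/r₂²)` and `(∇θ₁ + ∇θ₂)·X3 = (x₁x₄ + x₂x₃)(1/r₁² - 1/r₂²)`.
In polar coordinates these mixed products are `r₁r₂ cos(θ₁+θ₂)` and `r₁r₂ sin(θ₁+θ₂)`, and
`cos γ cos s + sin γ sin s = cos (s - γ)`.
-/

lemma dot_linear_combination_right (a u v : Fin 4 → ℝ) (α β : ℝ) :
    dot a (fun i => α * u i + β * v i) = α * dot a u + β * dot a v := by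
  simp only [dot, mul_add, Finset.sum_add_distrib, Finset.mul_sum]
  congr 1 <;> exact Finset.sum_congr rfl fun _ _ => by ring

section AngleGradient

variable (x : Fin 4 → ℝ) (r₁ r₂ : ℝ)

lemma dot_grad_angle_sum_X2 :
    dot (fun i => ![-(x 1) / r₁ ^ 2, x 0 / r₁ ^ 2, 0, 0] i +
        ![0, 0, -(x 3) / r₂ ^ 2, x 2 / r₂ ^ 2] i) (X2 x) =
      (x 0 * x 2 - x 1 * x 3) * (1 / r₁ ^ 2 - 1 / r₂ ^ 2) := by
  simp only [dot, X2, Fin.sum_univ_four,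
    Matrix.cons_val_zero, Matrix.cons_val_one, Matrix.cons_val]
  ring

lemma dot_grad_angle_sum_X3 :
    dot (fun i => ![-(x 1) / r₁ ^ 2, x 0 / r₁ ^ 2, 0, 0] i +
        ![0, 0, -(x 3) / r₂ ^ 2, x 2 / r₂ ^ 2] i) (X3 x) =
      (x 0 * x 3 + x 1 * x 2) * (1 / r₁ ^ 2 - 1 / r₂ ^ 2) := by
  simp only [dot, X3, Fin.sum_univ_four,
    Matrix.cons_val_zero, Matrix.cons_val_one, Matrix.cons_val]
  ring

end AngleGradient

section Polar

variable (r₁ r₂ θ₁ θ₂ : ℝ)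

lemma polar_mixed_product_cos :
    let x : Fin 4 → ℝ := ![r₁ * cos θ₁, r₁ * sin θ₁, r₂ * cos θ₂, r₂ * sin θ₂]
    x 0 * x 2 - x 1 * x 3 = r₁ * r₂ * cos (θ₁ + θ₂) := by
  simp only [Matrix.cons_val_zero, Matrix.cons_val_one, Matrix.cons_val, cos_add]
  ring

lemma polar_mixed_product_sin :
    let x : Fin 4 → ℝ := ![r₁ * cos θ₁, r₁ * sin θ₁, r₂ * cos θ₂, r₂ * sin θ₂]
    x 0 * x 3 + x 1 * x 2 = r₁ * r₂ * sin (θ₁ + θ₂) := by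
  simp only [Matrix.cons_val_zero, Matrix.cons_val_one, Matrix.cons_val, sin_add]
  ring

end Polar

lemma mul_mul_one_div_sq_sub {r₁ r₂ : ℝ} (hr₁ : r₁ ≠ 0) (hr₂ : r₂ ≠ 0) :
    r₁ * r₂ * (1 / r₁ ^ 2 - 1 / r₂ ^ 2) = r₂ / r₁ - r₁ / r₂ := by
  field_simp

/-- For `α = cos γ`, `β = sin γ`, away from {r₁=0} ∪ {r₂=0}:
`∇(θ₁+θ₂) · (α X2 + β X3) = (r₂/r₁ - r₁/r₂)·cos(θ₁+θ₂-γ)`. -/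
theorem angle_sum_deriv (α β γ r₁ r₂ θ₁ θ₂ : ℝ)
    (hα : α = cos γ) (hβ : β = sin γ)
    (hr₁ : 0 < r₁) (hr₂ : 0 < r₂)
    (x : Fin 4 → ℝ)
    (hx : x = ![r₁ * cos θ₁, r₁ * sin θ₁, r₂ * cos θ₂, r₂ * sin θ₂])
    (gradθ₁ gradθ₂ : Fin 4 → ℝ)
    (hg₁ : gradθ₁ = ![-(x 1) / r₁ ^ 2, x 0 / r₁ ^ 2, 0, 0])
    (hg₂ : gradθ₂ = ![0, 0, -(x 3) / r₂ ^ 2, x 2 / r₂ ^ 2]) :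
    dot (fun i => gradθ₁ i + gradθ₂ i) (fun i => α * X2 x i + β * X3 x i) =
      (r₂ / r₁ - r₁ / r₂) * cos (θ₁ + θ₂ - γ) := by
  subst hα hβ hg₁ hg₂
  rw [dot_linear_combination_right, dot_grad_angle_sum_X2, dot_grad_angle_sum_X3, hx,
    polar_mixed_product_cos, polar_mixed_product_sin, cos_sub,
    ← mul_mul_one_div_sq_sub hr₁.ne' hr₂.ne']
  ring
end
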